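/- arXiv:2205.14502 — 3 statements merged into one kernel-verified Lean document; each statement's English description precedes it below -/
import Mathlib

section
/- Being D is a Whitney property: if X is a D-continuum, μ : C(X) → [0, μ(X)] is a Whitney map, and t ∈ (0, μ(X)), then the Whitney level μ⁻¹(t), regarded as a subspace of C(X) with the Hausdorff metric, is a D-continuum. -/
open TopologicalSpace

/-- A topological space is a *D-space* if for every pair of disjoint nondegenerate
subcontinua `A, B` there is a subcontinuum `C` meeting both `A` and `B` with
`(A ∪ B) \ C ≠ ∅`. -/
def DSpace (X : Type*) [TopologicalSpace X] : Prop :=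
  ∀ A B : Set X, IsCompact A → IsConnected A → A.Nontrivial →
    IsCompact B → IsConnected B → B.Nontrivial → Disjoint A B →
    ∃ C : Set X, IsCompact C ∧ IsConnected C ∧
      (A ∩ C).Nonempty ∧ (B ∩ C).Nonempty ∧ ((A ∪ B) \ C).Nonempty

/-- The hyperspace `C(X)` of all subcontinua of `X`, i.e. nonempty compact connected
subsets, with the Hausdorff metric. -/
abbrev Hyperspace (X : Type*) [MetricSpace X] : Type _ :=
  {K : NonemptyCompacts X // IsConnected (K : Set X)}

/-!
Boundary bumping gives the growth property of a Whitney map `μ`: if `A ⊆ Y` are continua, every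
value between `μ A` and `μ Y` is taken by a continuum `C` with `A ⊆ C ⊆ Y`. Hence a maximal chain
of continua from `{x}` to `T` is an order arc, parametrized by `μ`.

A Whitney level `ℒ = μ⁻¹(t)` is closed in the compact hyperspace. It is connected: two members
`A`, `B` of `ℒ` through a common point `x` are joined inside `ℒ` by the unions `α s ∪ β u` that lie
in `ℒ`, where `α`, `β` are order arcs from `{x}` to `A` and `B`; since the members of `ℒ` cover
`X`, the unions of the two parts of a separation of `ℒ` would meet.

For the D-property let `𝒜`, `ℬ` be nondegenerate subcontinua of `ℒ`. If a member of `𝒜` meets a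
member of `ℬ`, one of the connecting continua above misses a member of `𝒜 ∪ ℬ`. Otherwise take
`A₁ ≠ A₂` in `𝒜`, `B₁ ≠ B₂` in `ℬ`, and nondegenerate continua `K ⊆ A₂ \ A₁`, `L ⊆ B₂ \ B₁`. The
D-property of `X`, applied to `K` and `L`, yields a continuum `D` containing a member of `𝒜` and
one of `ℬ` but not all of `A₁, A₂, B₁, B₂`; the members of `ℒ` inside `D` form the required
subcontinuum of `ℒ`.
-/

open Set Topology

section Continua

variable {α : Type*} [TopologicalSpace α]

theorem exists_isClopen_disjoint_of_disjoint_connectedComponent [T2Space α] [CompactSpace α]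
    {x : α} {F : Set α} (hF : IsClosed F) (h : Disjoint (connectedComponent x) F) :
    ∃ U, IsClopen U ∧ x ∈ U ∧ Disjoint U F := by
  rw [connectedComponent_eq_iInter_isClopen, disjoint_iff_inter_eq_empty, inter_comm] at h
  obtain ⟨u, hu⟩ := hF.isCompact.elim_finite_subfamily_closed _ (fun s => s.2.1.isClosed) h
  refine ⟨⋂ s ∈ u, s.1, isClopen_biInter_finset fun s _ => s.2.1,
    mem_iInter₂.2 fun s _ => s.2.2, ?_⟩
  rw [disjoint_iff_inter_eq_empty, inter_comm, hu]

theorem IsCompact.connectedComponentIn {K : Set α} (hK : IsCompact K) (x : α) :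
    IsCompact (connectedComponentIn K x) := by
  by_cases hx : x ∈ K
  · have := isCompact_iff_compactSpace.mp hK
    rw [connectedComponentIn_eq_image hx]
    exact isClosed_connectedComponent.isCompact.image continuous_subtype_val
  · rw [connectedComponentIn_eq_empty hx]
    exact isCompact_empty

/-- Boundary bumping. -/
theorem IsPreconnected.connectedComponentIn_not_subset [T2Space α] {Y K W : Set α}
    (hY : IsPreconnected Y) (hK : IsCompact K) (hKY : K ⊆ Y) (hYK : ¬Y ⊆ K) (hW : IsOpen W)
    (hYW : Y ∩ W ⊆ K) {x : α} (hx : x ∈ K) : ¬_root_.connectedComponentIn K x ⊆ W := by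
  intro hxW
  have := isCompact_iff_compactSpace.mp hK
  obtain ⟨U, hU, hxU, hUW⟩ := exists_isClopen_disjoint_of_disjoint_connectedComponent
    (x := ⟨x, hx⟩) (hW.isClosed_compl.preimage continuous_subtype_val) (by
      rw [disjoint_iff_forall_ne]
      rintro y hy z hz rfl
      exact hz (hxW (connectedComponentIn_eq_image hx ▸ mem_image_of_mem _ hy)))
  obtain ⟨O, hO, rfl⟩ := isOpen_induced_iff.mp hU.isOpen
  set E := Subtype.val '' (Subtype.val ⁻¹' O : Set K)
  have hE : IsClosed E := (hU.isClosed.isCompact.image continuous_subtype_val).isClosed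
  have hEOW : E ⊆ O ∩ W := by
    rintro _ ⟨z, hzO, rfl⟩
    exact ⟨hzO, not_not.1 (disjoint_left.1 hUW hzO)⟩
  obtain ⟨y, hyY, ⟨hyO, hyW⟩, hyE⟩ := hY (O ∩ W) Eᶜ (hO.inter hW) hE.isOpen_compl
    (fun y _ => or_iff_not_imp_right.2 fun h => hEOW (not_not.1 h))
    ⟨x, hKY hx, hxU, hxW (mem_connectedComponentIn hx)⟩
    (let ⟨y, hyY, hyK⟩ := not_subset.1 hYK; ⟨y, hyY, fun ⟨z, _, hz⟩ => hyK (hz ▸ z.2)⟩)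
  exact hyE ⟨⟨y, hYW ⟨hyY, hyW⟩⟩, hyO, rfl⟩

theorem exists_isConnected_ssuperset_subset [T2Space α] [NormalSpace α] {C Y U : Set α}
    (hC : IsConnected C) (hCc : IsCompact C) (hY : IsConnected Y) (hYc : IsCompact Y)
    (hCY : C ⊂ Y) (hU : IsOpen U) (hCU : C ⊆ U) :
    ∃ D, IsCompact D ∧ IsConnected D ∧ C ⊂ D ∧ D ⊆ Y ∩ U := by
  by_cases hYU : Y ⊆ U
  · exact ⟨Y, hYc, hY, hCY, subset_inter subset_rfl hYU⟩
  obtain ⟨W, hW, hCW, hWU⟩ := normal_exists_closure_subset hCc.isClosed hU hCU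
  obtain ⟨x, hx⟩ := hC.nonempty
  set K := Y ∩ closure W
  have hxK : x ∈ K := ⟨hCY.subset hx, subset_closure (hCW hx)⟩
  have hCD : C ⊆ connectedComponentIn K x :=
    hC.isPreconnected.subset_connectedComponentIn hx (subset_inter hCY.subset
      (hCW.trans subset_closure))
  obtain ⟨d, hdD, hdW⟩ := not_subset.1 <| hY.isPreconnected.connectedComponentIn_not_subset
    (hYc.inter_right isClosed_closure) inter_subset_left
    (fun hYK => hYU (hYK.trans (inter_subset_right.trans hWU))) hW
    (fun y hy => ⟨hy.1, subset_closure hy.2⟩) hxK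
  refine ⟨_, (hYc.inter_right isClosed_closure).connectedComponentIn x,
    isConnected_connectedComponentIn_iff.2 hxK, ssubset_of_subset_not_subset hCD
      fun h => hdW (hCW (h hdD)), (connectedComponentIn_subset _ _).trans
      (inter_subset_inter_right _ hWU)⟩

theorem exists_isConnected_nontrivial_subset_disjoint [T2Space α] [NormalSpace α]
    {A S : Set α} (hA : IsConnected A) (hAc : IsCompact A)
    (hAnt : A.Nontrivial) (hS : IsClosed S) (hAS : ¬A ⊆ S) :
    ∃ K ⊆ A, IsCompact K ∧ IsConnected K ∧ K.Nontrivial ∧ Disjoint K S := by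
  obtain ⟨w, hwA, hwS⟩ := not_subset.1 hAS
  obtain ⟨K, hKc, hK, hwK, hKAS⟩ := exists_isConnected_ssuperset_subset isConnected_singleton
    isCompact_singleton hA hAc (ssubset_of_subset_of_ne (singleton_subset_iff.2 hwA)
      (hAnt.ne_singleton).symm) hS.isOpen_compl (singleton_subset_iff.2 hwS)
  exact ⟨K, fun x hx => (hKAS hx).1, hKc, hK,
    (nontrivial_iff_ne_singleton (hwK.subset rfl)).2 hwK.ne',
    disjoint_left.2 fun x hx => (hKAS hx).2⟩

end Continua

theorem IsMaxChain.mem_of_forall {α : Type*} {r : α → α → Prop} {s : Set α} {a : α}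
    (h : IsMaxChain r s) (ha : ∀ b ∈ s, r a b ∨ r b a) : a ∈ s :=
  (h.2 (h.1.insert fun b hb _ => ha b hb) (subset_insert _ _)).symm ▸ mem_insert _ _

theorem IsMaxChain.isClosed {α : Type*} [TopologicalSpace α] [Preorder α] [OrderClosedTopology α]
    {s : Set α} (h : IsMaxChain (· ≤ ·) s) : IsClosed s := by
  have hT : IsClosed {p : α × α | p.1 ≤ p.2 ∨ p.2 ≤ p.1} :=
    (isClosed_le continuous_fst continuous_snd).union (isClosed_le continuous_snd continuous_fst)
  have hchain : IsChain (· ≤ ·) (closure s) := fun a ha b hb _ => by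
    have hsub : s ×ˢ s ⊆ {p : α × α | p.1 ≤ p.2 ∨ p.2 ≤ p.1} := fun p hp => h.1.total hp.1 hp.2
    have hab : (a, b) ∈ closure (s ×ˢ s) := by rw [closure_prod_eq]; exact ⟨ha, hb⟩
    exact closure_minimal hsub hT hab
  exact closure_subset_iff_isClosed.1 (h.2 hchain subset_closure).symm.subset

theorem isConnected_Icc_prod_Icc_inter_preimage_of_monotone {f : ℝ × ℝ → ℝ} (hf : Continuous f)
    {a b c d t : ℝ} (hab : a ≤ b) (hcd : c ≤ d) (hmono : ∀ s, Monotone fun u => f (s, u))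
    (hc : ∀ s ∈ Icc a b, f (s, c) ≤ t) (hd : ∀ s ∈ Icc a b, t ≤ f (s, d)) :
    IsConnected (Icc a b ×ˢ Icc c d ∩ f ⁻¹' {t}) := by
  set Z := Icc a b ×ˢ Icc c d ∩ f ⁻¹' {t}
  have : CompactSpace Z := isCompact_iff_compactSpace.mp
    ((isCompact_Icc.prod isCompact_Icc).inter_right (isClosed_singleton.preimage hf))
  have := Subtype.connectedSpace (isConnected_Icc hab)
  have hfib : ∀ s ∈ Icc a b, IsConnected {u | u ∈ Icc c d ∧ f (s, u) = t} := fun s hs =>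
    ⟨let ⟨u, hu, hfu⟩ := intermediate_value_Icc hcd
      (hf.comp (Continuous.prodMk_right s)).continuousOn ⟨hc s hs, hd s hs⟩; ⟨u, hu, hfu⟩,
    OrdConnected.isPreconnected ⟨fun u₁ hu₁ u₂ hu₂ u hu =>
      ⟨⟨hu₁.1.1.trans hu.1, hu.2.trans hu₂.1.2⟩,
        le_antisymm (hu₂.2 ▸ hmono s hu.2) (hu₁.2 ▸ hmono s hu.1)⟩⟩⟩
  -- The first projection `Z → [a, b]` is a closed surjection whose fibres are intervals.
  let g : Z → Icc a b := fun p => ⟨p.1.1, p.2.1.1⟩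
  have hg : Continuous g := by fun_prop
  have hfib' : ∀ s, IsConnected (g ⁻¹' {s}) := by
    intro s
    have himage : Subtype.val '' (g ⁻¹' {s}) =
        (fun u => (s.1, u)) '' {u | u ∈ Icc c d ∧ f (s, u) = t} := by
      ext ⟨p, q⟩
      aesop
    refine ⟨?_, IsInducing.subtypeVal.isPreconnected_image.1 ?_⟩
    · obtain ⟨u, hu, hfu⟩ := (hfib s s.2).nonempty
      exact ⟨⟨(s, u), ⟨s.2, hu⟩, hfu⟩, rfl⟩
    · rw [himage]
      exact (hfib s s.2).isPreconnected.image _ (by fun_prop)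
  have hgs : Function.Surjective g := fun s => (hfib' s).nonempty
  have := ((hg.isClosedMap.isQuotientMap hg hgs).isCoinducing.isConnected_preimage_of_isClosed
    hfib' isClosed_univ isConnected_univ)
  exact isConnected_iff_connectedSpace.2 (connectedSpace_iff_univ.2 this)

namespace TopologicalSpace.NonemptyCompacts

variable {α : Type*} [TopologicalSpace α] [T2Space α]

theorem isClosed_setOf_isConnected :
    IsClosed {K : NonemptyCompacts α | IsConnected (K : Set α)} := by
  refine isOpen_compl_iff.1 (isOpen_iff_forall_mem_open.2 fun K hK => ?_)
  obtain ⟨u, v, hu, hv, hKuv, huv, hKu, hKv⟩ : ∃ u v : Set α, IsClosed u ∧ IsClosed v ∧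
      (K : Set α) ⊆ u ∪ v ∧ Disjoint u v ∧ ¬(K : Set α) ⊆ u ∧ ¬(K : Set α) ⊆ v := by
    simpa [IsConnected, K.nonempty, isPreconnected_iff_subset_of_fully_disjoint_closed
      K.isCompact.isClosed, not_or] using hK
  obtain ⟨U, V, hU, hV, hKU, hKV, hUV⟩ := SeparatedNhds.of_isCompact_isCompact
    (K.isCompact.inter_right hu) (K.isCompact.inter_right hv)
    (huv.mono inter_subset_right inter_subset_right)
  refine ⟨{L | (L : Set α) ⊆ U ∪ V} ∩ {L | ((L : Set α) ∩ U).Nonempty} ∩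
    {L | ((L : Set α) ∩ V).Nonempty}, ?_, ((isOpen_subsets_of_isOpen (hU.union hV)).inter
      (isOpen_inter_nonempty_of_isOpen hU)).inter (isOpen_inter_nonempty_of_isOpen hV), ?_⟩
  · rintro L ⟨⟨hLUV, hLU⟩, hLV⟩ hL
    obtain ⟨x, hxL, hxU, hxV⟩ := hL.isPreconnected U V hU hV hLUV hLU hLV
    exact hUV.ne_of_mem hxU hxV rfl
  · refine ⟨⟨fun x hx => ?_, ?_⟩, ?_⟩
    · rcases hKuv hx with h | h
      exacts [Or.inl (hKU ⟨hx, h⟩), Or.inr (hKV ⟨hx, h⟩)]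
    · obtain ⟨x, hxK, hxv⟩ := not_subset.1 hKv
      exact ⟨x, hxK, hKU ⟨hxK, (hKuv hxK).resolve_right hxv⟩⟩
    · obtain ⟨x, hxK, hxu⟩ := not_subset.1 hKu
      exact ⟨x, hxK, hKV ⟨hxK, (hKuv hxK).resolve_left hxu⟩⟩

instance : OrderClosedTopology (NonemptyCompacts α) := by
  refine ⟨isOpen_compl_iff.1 (isOpen_iff_forall_mem_open.2 fun p hp => ?_)⟩
  obtain ⟨x, hx1, hx2⟩ := not_subset.1 hp
  obtain ⟨U, V, hU, hV, hxU, hV2, hUV⟩ := SeparatedNhds.of_isCompact_isCompact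
    isCompact_singleton p.2.isCompact (disjoint_singleton_left.2 hx2)
  refine ⟨{L : NonemptyCompacts α | ((L : Set α) ∩ U).Nonempty} ×ˢ
    {L : NonemptyCompacts α | (L : Set α) ⊆ V}, ?_,
    (isOpen_inter_nonempty_of_isOpen hU).prod (isOpen_subsets_of_isOpen hV),
    ⟨⟨x, hx1, hxU rfl⟩, hV2⟩⟩
  rintro q ⟨⟨y, hy1, hyU⟩, hq2⟩ hq
  exact hUV.ne_of_mem hyU (hq2 (hq hy1)) rfl

end TopologicalSpace.NonemptyCompacts

namespace Hyperspace

variable {X : Type*} [MetricSpace X]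

instance [CompactSpace X] : CompactSpace (Hyperspace X) :=
  isCompact_iff_compactSpace.mp NonemptyCompacts.isClosed_setOf_isConnected.isCompact

def ofSet (S : Set X) (hS : IsCompact S) (hc : IsConnected S) : Hyperspace X :=
  ⟨⟨⟨S, hS⟩, hc.nonempty⟩, hc⟩

def pt (x : X) : Hyperspace X := ofSet {x} isCompact_singleton isConnected_singleton

theorem pt_le_iff {x : X} {A : Hyperspace X} : pt x ≤ A ↔ x ∈ (A : Set X) :=
  singleton_subset_iff

theorem isCompact_biUnion_coe {𝒜 : Set (Hyperspace X)} (h𝒜 : IsCompact 𝒜) :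
    IsCompact (⋃ A ∈ 𝒜, (A : Set X)) := by
  have := NonemptyCompacts.isCompact_biUnion_coe_of_isCompact (h𝒜.image continuous_subtype_val)
  rwa [biUnion_image] at this

theorem exists_isOpen_forall_mem_of_mem_nhds {C : Hyperspace X} {𝒩 : Set (Hyperspace X)}
    (h𝒩 : 𝒩 ∈ 𝓝 C) :
    ∃ U, IsOpen U ∧ (C : Set X) ⊆ U ∧ ∀ D, C ≤ D → (D : Set X) ⊆ U → D ∈ 𝒩 := by
  obtain ⟨ε, hε, hε𝒩⟩ := Metric.mem_nhds_iff.1 h𝒩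
  refine ⟨Metric.thickening (ε / 2) C, Metric.isOpen_thickening,
    Metric.self_subset_thickening (half_pos hε) _, fun D hCD hDU => hε𝒩 ?_⟩
  have : Metric.hausdorffDist (D : Set X) C ≤ ε / 2 :=
    Metric.hausdorffDist_le_of_mem_dist (half_pos hε).le
      (fun x hx => let ⟨y, hy, hxy⟩ := Metric.mem_thickening_iff.1 (hDU hx); ⟨y, hy, hxy.le⟩)
      (fun x hx => ⟨x, hCD hx, by simpa using (half_pos hε).le⟩)
  exact Metric.mem_ball.2 (this.trans_lt (half_lt_self hε))

end Hyperspace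

section

open Hyperspace

variable {X : Type*} [MetricSpace X]

theorem DSpace.exists_le_not_le (hX : DSpace X) {A₁ A₂ B₁ B₂ : Hyperspace X}
    (hA₁₂ : ¬A₁ ≤ A₂) (hA₂₁ : ¬A₂ ≤ A₁) (hB₁₂ : ¬B₁ ≤ B₂) (hB₂₁ : ¬B₂ ≤ B₁)
    (hA₂ : (A₂ : Set X).Nontrivial) (hB₂ : (B₂ : Set X).Nontrivial)
    (h₁₂ : Disjoint (A₁ : Set X) B₂) (h₂₁ : Disjoint (A₂ : Set X) B₁)
    (h₂₂ : Disjoint (A₂ : Set X) B₂) :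
    ∃ D : Hyperspace X, (A₁ ≤ D ∨ A₂ ≤ D) ∧ (B₁ ≤ D ∨ B₂ ≤ D) ∧
      ¬(A₁ ≤ D ∧ A₂ ≤ D ∧ B₁ ≤ D ∧ B₂ ≤ D) := by
  obtain ⟨K, hKA, hKc, hK, hKnt, hKA₁⟩ := exists_isConnected_nontrivial_subset_disjoint
    A₂.2 A₂.1.isCompact hA₂ A₁.1.isCompact.isClosed hA₂₁
  obtain ⟨L, hLB, hLc, hL, hLnt, hLB₁⟩ := exists_isConnected_nontrivial_subset_disjoint
    B₂.2 B₂.1.isCompact hB₂ B₁.1.isCompact.isClosed hB₂₁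
  obtain ⟨C, hCc, hC, ⟨p, hpK, hpC⟩, ⟨q, hqL, hqC⟩, z, hzKL, hzC⟩ :=
    hX K L hKc hK hKnt hLc hL hLnt (h₂₂.mono hKA hLB)
  -- Otherwise `A₂ ∪ C ∪ B₂` contains `A₁` and `B₁`, so they meet `C`; then `A₁ ∪ C ∪ B₁`
  -- contains the point `z ∉ C` of `K ∪ L`, which avoids `A₁ ∪ B₁`.
  by_contra! hall
  have hjoin : ∀ A B : Hyperspace X, ((A : Set X) ∩ C).Nonempty → (C ∩ B).Nonempty →
      (A₁ ≤ A ∨ A₂ ≤ A) → (B₁ ≤ B ∨ B₂ ≤ B) →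
      ∀ W ∈ ({A₁, A₂, B₁, B₂} : Set (Hyperspace X)), (W : Set X) ⊆ A ∪ C ∪ B := by
    intro A B hAC hCB hA hB
    have hD := hall (ofSet _ ((A.1.isCompact.union hCc).union B.1.isCompact)
      ((A.2.union hAC hC).union (hCB.mono (inter_subset_inter_left _ subset_union_right)) B.2))
      (hA.imp (·.trans (subset_union_left.trans subset_union_left))
        (·.trans (subset_union_left.trans subset_union_left)))
      (hB.imp (·.trans subset_union_right) (·.trans subset_union_right))
    rintro W (rfl | rfl | rfl | rfl)
    exacts [hD.1, hD.2.1, hD.2.2.1, hD.2.2.2]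
  have h₂ := hjoin A₂ B₂ ⟨p, hKA hpK, hpC⟩ ⟨q, hqC, hLB hqL⟩ (Or.inr le_rfl) (Or.inr le_rfl)
  have hA₁C : ((A₁ : Set X) ∩ C).Nonempty := by
    by_contra h
    refine hA₁₂ fun a ha => ?_
    rcases h₂ A₁ (by simp) ha with (h' | h') | h'
    exacts [h', (h ⟨a, ha, h'⟩).elim, (h₁₂.ne_of_mem ha h' rfl).elim]
  have hB₁C : (C ∩ B₁).Nonempty := by
    by_contra h
    refine hB₁₂ fun b hb => ?_
    rcases h₂ B₁ (by simp) hb with (h' | h') | h'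
    exacts [(h₂₁.ne_of_mem h' hb rfl).elim, (h ⟨b, h', hb⟩).elim, h']
  have h₁ := hjoin A₁ B₁ hA₁C hB₁C (Or.inl le_rfl) (Or.inl le_rfl)
  rcases hzKL with hz | hz
  · rcases h₁ A₂ (by simp) (hKA hz) with (h | h) | h
    exacts [hKA₁.ne_of_mem hz h rfl, hzC h, h₂₁.ne_of_mem (hKA hz) h rfl]
  · rcases h₁ B₂ (by simp) (hLB hz) with (h | h) | h
    exacts [h₁₂.ne_of_mem h (hLB hz) rfl, hzC h, hLB₁.ne_of_mem hz h rfl]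

structure IsWhitneyMap (μ : Hyperspace X → ℝ) : Prop where
  continuous : Continuous μ
  map_pt : ∀ x, μ (pt x) = 0
  strictMono : StrictMono μ

namespace IsWhitneyMap

variable {μ : Hyperspace X → ℝ} (hμ : IsWhitneyMap μ)
include hμ

theorem nonneg (A : Hyperspace X) : 0 ≤ μ A :=
  let ⟨a, ha⟩ := A.1.nonempty
  hμ.map_pt a ▸ hμ.strictMono.monotone (pt_le_iff.2 ha)

theorem eq_of_le_of_map_eq {A B : Hyperspace X} (h : A ≤ B) (hAB : μ A = μ B) : A = B :=
  by_contra fun hne => (hμ.strictMono (lt_of_le_of_ne h hne)).ne hAB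

theorem le_of_map_le {A B : Hyperspace X} (hAB : A ≤ B ∨ B ≤ A) (h : μ A ≤ μ B) : A ≤ B :=
  hAB.elim id fun hBA =>
    (hμ.eq_of_le_of_map_eq hBA (le_antisymm (hμ.strictMono.monotone hBA) h)).ge

theorem nontrivial_of_pos {A : Hyperspace X} (h : 0 < μ A) : (A : Set X).Nontrivial := by
  obtain ⟨a, ha⟩ := A.1.nonempty
  by_contra hA
  have : A = pt a :=
    Subtype.ext (NonemptyCompacts.ext ((not_nontrivial_iff.1 hA).eq_singleton_of_mem ha))
  exact h.ne' (this ▸ hμ.map_pt a)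

variable [CompactSpace X]

theorem exists_mem_Icc_map_eq {A Y : Hyperspace X} (hAY : A ≤ Y) {s : ℝ}
    (hs : s ∈ Icc (μ A) (μ Y)) : ∃ C ∈ Icc A Y, μ C = s := by
  obtain ⟨C, ⟨hC, hCs⟩, hmax⟩ := (isClosed_Icc.inter (isClosed_Iic.preimage hμ.continuous))
    |>.isCompact.exists_isMaxOn ⟨A, ⟨le_rfl, hAY⟩, hs.1⟩ hμ.continuous.continuousOn
  -- If `μ C < s`, boundary bumping enlarges `C` inside `Y` by so little that `μ` stays below `s`.
  refine ⟨C, hC, le_antisymm hCs (not_lt.1 fun hlt => ?_)⟩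
  have hCY : C < Y := lt_of_le_of_ne hC.2 (by rintro rfl; exact hlt.not_ge hs.2)
  obtain ⟨U, hU, hCU, hUs⟩ := exists_isOpen_forall_mem_of_mem_nhds
    (hμ.continuous.continuousAt.preimage_mem_nhds (Iio_mem_nhds hlt))
  obtain ⟨D, hDc, hD, hCD, hDYU⟩ :=
    exists_isConnected_ssuperset_subset C.2 C.1.isCompact Y.2 Y.1.isCompact hCY hU hCU
  have hCD' : C < ofSet D hDc hD := hCD
  have hDs : μ (ofSet D hDc hD) < s := hUs _ hCD'.le fun x hx => (hDYU hx).2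
  exact (hμ.strictMono hCD').not_ge <| hmax ⟨⟨hC.1.trans hCD'.le, fun x hx => (hDYU hx).1⟩, hDs.le⟩

theorem exists_mem_maxChain_map_eq {M : Set (Hyperspace X)} (hM : IsMaxChain (· ≤ ·) M)
    {A B : Hyperspace X} (hA : A ∈ M) (hB : B ∈ M) {s : ℝ} (hs : s ∈ Icc (μ A) (μ B)) :
    ∃ C ∈ M, μ C = s := by
  obtain ⟨Cm, ⟨hCm, hCms⟩, hmax⟩ := (hM.isClosed.inter (isClosed_Iic.preimage hμ.continuous))
    |>.isCompact.exists_isMaxOn ⟨A, hA, hs.1⟩ hμ.continuous.continuousOn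
  obtain ⟨Cp, ⟨hCp, hCps⟩, hmin⟩ := (hM.isClosed.inter (isClosed_Ici.preimage hμ.continuous))
    |>.isCompact.exists_isMinOn ⟨B, hB, hs.2⟩ hμ.continuous.continuousOn
  have hgap : ∀ E ∈ M, E ≤ Cm ∨ Cp ≤ E := fun E hE => (le_total (μ E) s).imp
    (fun h => hμ.le_of_map_le (hM.1.total hE hCm) (hmax ⟨hE, h⟩))
    (fun h => hμ.le_of_map_le (hM.1.total hCp hE) (hmin ⟨hE, h⟩))
  obtain ⟨D, hD, hDs⟩ := hμ.exists_mem_Icc_map_eq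
    (hμ.le_of_map_le (hM.1.total hCm hCp) (le_trans hCms hCps)) ⟨hCms, hCps⟩
  -- `D` fills the gap between `Cm` and `Cp`, so maximality puts it in `M`.
  exact ⟨D, hM.mem_of_forall fun E hE => (hgap E hE).symm.imp (hD.2.trans ·) (·.trans hD.1), hDs⟩

theorem exists_orderArc {x : X} {T : Hyperspace X} (hx : x ∈ (T : Set X)) :
    ∃ φ : ℝ → Hyperspace X, Continuous φ ∧ Monotone φ ∧ φ 0 = pt x ∧ φ (μ T) = T ∧
      (∀ s, φ s ∈ Icc (pt x) T) ∧ ∀ s ∈ Icc 0 (μ T), μ (φ s) = s := by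
  obtain ⟨M, hM, hxTM⟩ := (IsChain.pair (pt_le_iff.2 hx)).exists_maxChain
  have hxM : pt x ∈ M := hxTM (mem_insert _ _)
  have hTM : T ∈ M := hxTM (mem_insert_of_mem _ rfl)
  -- `μ` maps the compact chain `M ∩ Iic T` homeomorphically onto `[0, μ T]`.
  have := isCompact_iff_compactSpace.mp (hM.isClosed.inter (isClosed_Iic (a := T))).isCompact
  let f : ↥(M ∩ Iic T) → Icc 0 (μ T) := fun E =>
    ⟨μ E, hμ.nonneg _, hμ.strictMono.monotone E.2.2⟩
  have hf : Function.Bijective f := by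
    refine ⟨fun E F hEF => Subtype.ext (le_antisymm ?_ ?_), fun s => ?_⟩
    · exact hμ.le_of_map_le (hM.1.total E.2.1 F.2.1) (congrArg Subtype.val hEF).le
    · exact hμ.le_of_map_le (hM.1.total F.2.1 E.2.1) (congrArg Subtype.val hEF).ge
    · obtain ⟨C, hC, hCs⟩ := hμ.exists_mem_maxChain_map_eq hM hxM hTM
        (s := s) ⟨(hμ.map_pt x).symm ▸ s.2.1, s.2.2⟩
      exact ⟨⟨C, hC, hμ.le_of_map_le (hM.1.total hC hTM) (hCs ▸ s.2.2)⟩, Subtype.ext hCs⟩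
  let e := (Continuous.subtype_mk (hμ.continuous.comp continuous_subtype_val) _)
    |>.homeoOfEquivCompactToT2 (f := Equiv.ofBijective f hf)
  let φ : ℝ → Hyperspace X := fun s => (e.symm (projIcc 0 (μ T) (hμ.nonneg T) s)).1
  have hφM : ∀ s, φ s ∈ M := fun s => (e.symm _).2.1
  have hφproj : ∀ s, μ (φ s) = projIcc 0 (μ T) (hμ.nonneg T) s :=
    fun s => congrArg Subtype.val (e.apply_symm_apply _)
  have hφμ : ∀ s ∈ Icc 0 (μ T), μ (φ s) = s := fun s hs => by rw [hφproj, projIcc_of_mem _ hs]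
  have hφI : ∀ s, φ s ∈ Icc (pt x) T := fun s =>
    ⟨hμ.le_of_map_le (hM.1.total hxM (hφM s)) (by rw [hμ.map_pt]; exact hμ.nonneg _),
      (e.symm _).2.2⟩
  refine ⟨φ, continuous_subtype_val.comp (e.symm.continuous.comp continuous_projIcc),
    fun s u hsu => hμ.le_of_map_le (hM.1.total (hφM s) (hφM u))
      (by rw [hφproj, hφproj]; exact monotone_projIcc _ hsu),
    (hμ.eq_of_le_of_map_eq (hφI 0).1 ?_).symm,
    hμ.eq_of_le_of_map_eq (hφI _).2 (hφμ _ ⟨hμ.nonneg T, le_rfl⟩), hφI, hφμ⟩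
  rw [hμ.map_pt, hφμ 0 ⟨le_rfl, hμ.nonneg T⟩]

theorem exists_isConnected_subset_level_of_mem_inter {A B : Hyperspace X} {x : X}
    (hxA : x ∈ (A : Set X)) (hxB : x ∈ (B : Set X)) (hAB : μ A = μ B) :
    ∃ Γ, IsCompact Γ ∧ IsConnected Γ ∧ A ∈ Γ ∧ B ∈ Γ ∧
      ∀ E ∈ Γ, μ E = μ A ∧ x ∈ (E : Set X) ∧ (E : Set X) ⊆ A ∪ B := by
  obtain ⟨α, hαc, -, hα0, hαA, hαI, hαμ⟩ := hμ.exists_orderArc hxA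
  obtain ⟨β, hβc, hβm, hβ0, hβB, hβI, hβμ⟩ := hμ.exists_orderArc hxB
  rw [← hAB] at hβB hβμ
  have ht : μ A ∈ Icc 0 (μ A) := ⟨hμ.nonneg A, le_rfl⟩
  -- `Γ` consists of the unions `α s ∪ β u` on the level of `A`: for fixed `s` the admissible `u`
  -- form a nonempty interval.
  let j : ℝ × ℝ → Hyperspace X := fun p => ⟨(α p.1).1 ⊔ (β p.2).1, by
    rw [NonemptyCompacts.coe_sup]
    exact (α p.1).2.union ⟨x, pt_le_iff.1 (hαI _).1, pt_le_iff.1 (hβI _).1⟩ (β p.2).2⟩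
  have hj : Continuous j :=
    ((continuous_subtype_val.comp (hαc.comp continuous_fst)).sup
      (continuous_subtype_val.comp (hβc.comp continuous_snd))).subtype_mk _
  have hj0 : ∀ s, j (s, 0) = α s := fun s =>
    Subtype.ext (sup_eq_left.2 (hβ0 ▸ (hαI s).1 : β 0 ≤ α s))
  have hj0' : ∀ u, j (0, u) = β u := fun u =>
    Subtype.ext (sup_eq_right.2 (hα0 ▸ (hβI u).1 : α 0 ≤ β u))
  set Z := Icc 0 (μ A) ×ˢ Icc 0 (μ A) ∩ (μ ∘ j) ⁻¹' {μ A}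
  have hZ : IsConnected Z := isConnected_Icc_prod_Icc_inter_preimage_of_monotone
    (hμ.continuous.comp hj) ht.1 ht.1
    (fun s u u' huu' => hμ.strictMono.monotone (sup_le_sup_left (hβm huu') (α s).1))
    (fun s hs => by simp only [Function.comp_apply, hj0, hαμ s hs, hs.2])
    (fun s _ => (hβμ _ ht).symm.le.trans (hμ.strictMono.monotone (le_sup_right : (β _).1 ≤ _)))
  have hAZ : (μ A, 0) ∈ Z :=
    ⟨⟨ht, le_rfl, ht.1⟩, by rw [mem_preimage, Function.comp_apply, hj0, hαA]; rfl⟩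
  have hBZ : (0, μ A) ∈ Z :=
    ⟨⟨⟨le_rfl, ht.1⟩, ht⟩, by rw [mem_preimage, Function.comp_apply, hj0', hβB]; exact hAB.symm⟩
  refine ⟨j '' Z, (((isCompact_Icc.prod isCompact_Icc).inter_right
    (isClosed_singleton.preimage (hμ.continuous.comp hj))).image hj), hZ.image _ hj.continuousOn,
    ⟨_, hAZ, by rw [hj0, hαA]⟩, ⟨_, hBZ, by rw [hj0', hβB]⟩, ?_⟩
  rintro _ ⟨p, hp, rfl⟩
  exact ⟨hp.2, Or.inl (pt_le_iff.1 (hαI _).1), union_subset_union (hαI _).2 (hβI _).2⟩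

variable {t : ℝ}

theorem isConnected_Iic_inter_level {Y : Hyperspace X} (ht : t ∈ Icc 0 (μ Y)) :
    IsConnected (Iic Y ∩ μ ⁻¹' {t}) := by
  set ℒ := Iic Y ∩ μ ⁻¹' {t}
  have hℒ : IsClosed ℒ := isClosed_Iic.inter (isClosed_singleton.preimage hμ.continuous)
  have hcover : ∀ y ∈ (Y : Set X), ∃ E ∈ ℒ, y ∈ (E : Set X) := fun y hy =>
    let ⟨E, hE, hEt⟩ := hμ.exists_mem_Icc_map_eq (pt_le_iff.2 hy)
      ⟨(hμ.map_pt y).symm ▸ ht.1, ht.2⟩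
    ⟨E, ⟨hE.2, hEt⟩, pt_le_iff.1 hE.1⟩
  obtain ⟨y₀, hy₀⟩ := Y.1.nonempty
  refine ⟨let ⟨E, hE, _⟩ := hcover y₀ hy₀; ⟨E, hE⟩, isPreconnected_closed_iff.2 ?_⟩
  rintro 𝒰 𝒱 h𝒰 h𝒱 hℒ𝒰𝒱 ⟨A, hAℒ, hA𝒰⟩ ⟨B, hBℒ, hB𝒱⟩
  -- The unions of the members of `ℒ` in `𝒰` and in `𝒱` cover `Y`, so two such members meet.
  have hmem : ∀ {𝒲 : Set (Hyperspace X)} {E}, E ∈ ℒ ∩ 𝒲 → ∀ {z}, z ∈ (E : Set X) →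
      z ∈ (Y : Set X) ∩ ⋃ E ∈ ℒ ∩ 𝒲, (E : Set X) :=
    fun hE _ hz => ⟨hE.1.1 hz, mem_biUnion hE hz⟩
  obtain ⟨y, -, hyP, hyQ⟩ := isPreconnected_closed_iff.1 Y.2.isPreconnected _ _
    (isCompact_biUnion_coe (hℒ.inter h𝒰).isCompact).isClosed
    (isCompact_biUnion_coe (hℒ.inter h𝒱).isCompact).isClosed
    (fun y hy => let ⟨E, hE, hyE⟩ := hcover y hy
      (hℒ𝒰𝒱 hE).imp (fun h => (hmem ⟨hE, h⟩ hyE).2) (fun h => (hmem ⟨hE, h⟩ hyE).2))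
    (let ⟨a, ha⟩ := A.1.nonempty; ⟨a, hmem ⟨hAℒ, hA𝒰⟩ ha⟩)
    (let ⟨b, hb⟩ := B.1.nonempty; ⟨b, hmem ⟨hBℒ, hB𝒱⟩ hb⟩)
  obtain ⟨A', ⟨hA'ℒ, hA'𝒰⟩, hyA'⟩ := mem_iUnion₂.1 hyP
  obtain ⟨B', ⟨hB'ℒ, hB'𝒱⟩, hyB'⟩ := mem_iUnion₂.1 hyQ
  have hA't : μ A' = t := hA'ℒ.2
  have hB't : μ B' = t := hB'ℒ.2
  obtain ⟨Γ, -, hΓ, hA'Γ, hB'Γ, hΓℒ⟩ :=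
    hμ.exists_isConnected_subset_level_of_mem_inter hyA' hyB' (hA't.trans hB't.symm)
  have hΓsub : Γ ⊆ ℒ := fun E hE =>
    let ⟨hEt, _, hEAB⟩ := hΓℒ E hE
    ⟨hEAB.trans (union_subset hA'ℒ.1 hB'ℒ.1), hEt.trans hA't⟩
  obtain ⟨E, hEΓ, hE⟩ := isPreconnected_closed_iff.1 hΓ.isPreconnected 𝒰 𝒱 h𝒰 h𝒱
    (hΓsub.trans hℒ𝒰𝒱) ⟨A', hA'Γ, hA'𝒰⟩ ⟨B', hB'Γ, hB'𝒱⟩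
  exact ⟨E, hΓsub hEΓ, hE⟩

variable {𝒜 ℬ : Set (Hyperspace X)}

theorem exists_subset_level_of_inter_nonempty (h𝒜 : 𝒜 ⊆ μ ⁻¹' {t}) (hℬ : ℬ ⊆ μ ⁻¹' {t})
    (h𝒜nt : 𝒜.Nontrivial) {A B : Hyperspace X} (hA : A ∈ 𝒜) (hB : B ∈ ℬ)
    (hAB : ((A : Set X) ∩ B).Nonempty) :
    ∃ 𝒞 ⊆ μ ⁻¹' {t}, IsCompact 𝒞 ∧ IsConnected 𝒞 ∧ (𝒜 ∩ 𝒞).Nonempty ∧ (ℬ ∩ 𝒞).Nonempty ∧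
      ((𝒜 ∪ ℬ) \ 𝒞).Nonempty := by
  -- Otherwise each member of `𝒜 ∪ ℬ` contains every common point of a meeting pair and lies in
  -- their union, which forces `A₂ ⊆ A₁`.
  by_contra! hno
  have key : ∀ A ∈ 𝒜, ∀ B ∈ ℬ, ∀ x ∈ (A : Set X) ∩ B, ∀ W ∈ 𝒜 ∪ ℬ,
      x ∈ (W : Set X) ∧ (W : Set X) ⊆ A ∪ B := by
    intro A hA B hB x hx W hW
    have hAt : μ A = t := h𝒜 hA
    obtain ⟨Γ, hΓc, hΓ, hAΓ, hBΓ, hΓE⟩ :=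
      hμ.exists_isConnected_subset_level_of_mem_inter hx.1 hx.2 (hAt.trans (hℬ hB).symm)
    have hWΓ := sdiff_eq_empty.1 (hno Γ (fun E hE => (hΓE E hE).1.trans hAt) hΓc hΓ
      ⟨A, hA, hAΓ⟩ ⟨B, hB, hBΓ⟩) hW
    exact (hΓE W hWΓ).2
  obtain ⟨A₁, hA₁, A₂, hA₂, hne⟩ := h𝒜nt
  obtain ⟨x, hxA, hxB⟩ := hAB
  have hxA₁ := (key A hA B hB x ⟨hxA, hxB⟩ A₁ (Or.inl hA₁)).1
  refine hne (hμ.eq_of_le_of_map_eq (fun y hy => ?_) ((h𝒜 hA₂).trans (h𝒜 hA₁).symm)).symm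
  rcases (key A₁ hA₁ B hB x ⟨hxA₁, hxB⟩ A₂ (Or.inl hA₂)).2 hy with h | h
  exacts [h, (key A₂ hA₂ B hB y ⟨hy, h⟩ A₁ (Or.inl hA₁)).1]

theorem exists_subset_level_of_dSpace (hX : DSpace X) (ht : 0 < t) (h𝒜 : 𝒜 ⊆ μ ⁻¹' {t})
    (hℬ : ℬ ⊆ μ ⁻¹' {t}) (h𝒜nt : 𝒜.Nontrivial) (hℬnt : ℬ.Nontrivial) :
    ∃ 𝒞 ⊆ μ ⁻¹' {t}, IsCompact 𝒞 ∧ IsConnected 𝒞 ∧ (𝒜 ∩ 𝒞).Nonempty ∧ (ℬ ∩ 𝒞).Nonempty ∧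
      ((𝒜 ∪ ℬ) \ 𝒞).Nonempty := by
  by_cases hmeet : ∃ A ∈ 𝒜, ∃ B ∈ ℬ, ¬Disjoint (A : Set X) B
  · obtain ⟨A, hA, B, hB, hAB⟩ := hmeet
    exact hμ.exists_subset_level_of_inter_nonempty h𝒜 hℬ h𝒜nt hA hB
      (not_disjoint_iff_nonempty_inter.1 hAB)
  have hdisj : ∀ A ∈ 𝒜, ∀ B ∈ ℬ, Disjoint (A : Set X) B := by simpa using hmeet
  have hinc : ∀ {E F}, E ∈ μ ⁻¹' {t} → F ∈ μ ⁻¹' {t} → E ≠ F → ¬E ≤ F := fun hE hF hEF hle =>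
    hEF (hμ.eq_of_le_of_map_eq hle (hE.trans hF.symm))
  have hnt : ∀ {E}, E ∈ μ ⁻¹' {t} → (E : Set X).Nontrivial := fun hE =>
    hμ.nontrivial_of_pos ((show μ _ = t from hE) ▸ ht)
  obtain ⟨A₁, hA₁, A₂, hA₂, hA⟩ := h𝒜nt
  obtain ⟨B₁, hB₁, B₂, hB₂, hB⟩ := hℬnt
  obtain ⟨D, hD𝒜, hDℬ, hDnot⟩ := hX.exists_le_not_le (hinc (h𝒜 hA₁) (h𝒜 hA₂) hA)
    (hinc (h𝒜 hA₂) (h𝒜 hA₁) hA.symm) (hinc (hℬ hB₁) (hℬ hB₂) hB) (hinc (hℬ hB₂) (hℬ hB₁) hB.symm)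
    (hnt (h𝒜 hA₂)) (hnt (hℬ hB₂)) (hdisj _ hA₁ _ hB₂) (hdisj _ hA₂ _ hB₁) (hdisj _ hA₂ _ hB₂)
  obtain ⟨A, hA, hAD⟩ : ∃ A ∈ 𝒜, A ≤ D := hD𝒜.elim (⟨A₁, hA₁, ·⟩) (⟨A₂, hA₂, ·⟩)
  obtain ⟨B, hB, hBD⟩ : ∃ B ∈ ℬ, B ≤ D := hDℬ.elim (⟨B₁, hB₁, ·⟩) (⟨B₂, hB₂, ·⟩)
  have htD : t ∈ Icc 0 (μ D) := ⟨ht.le, (show μ A = t from h𝒜 hA) ▸ hμ.strictMono.monotone hAD⟩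
  refine ⟨Iic D ∩ μ ⁻¹' {t}, inter_subset_right,
    (isClosed_Iic.inter (isClosed_singleton.preimage hμ.continuous)).isCompact,
    hμ.isConnected_Iic_inter_level htD, ⟨A, hA, hAD, h𝒜 hA⟩, ⟨B, hB, hBD, hℬ hB⟩, ?_⟩
  by_contra h
  rw [not_nonempty_iff_eq_empty, sdiff_eq_empty] at h
  exact hDnot ⟨(h (Or.inl hA₁)).1, (h (Or.inl hA₂)).1, (h (Or.inr hB₁)).1, (h (Or.inr hB₂)).1⟩

end IsWhitneyMap

end

theorem dSpace_coe_of {Y : Type*} [TopologicalSpace Y] {S : Set Y}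
    (h : ∀ 𝒜 ℬ : Set Y, 𝒜 ⊆ S → ℬ ⊆ S → 𝒜.Nontrivial → ℬ.Nontrivial →
      ∃ 𝒞 ⊆ S, IsCompact 𝒞 ∧ IsConnected 𝒞 ∧ (𝒜 ∩ 𝒞).Nonempty ∧
        (ℬ ∩ 𝒞).Nonempty ∧ ((𝒜 ∪ ℬ) \ 𝒞).Nonempty) :
    DSpace S := by
  intro 𝒜 ℬ _ _ h𝒜 _ _ hℬ _
  obtain ⟨𝒞, h𝒞, hc, hconn, ⟨_, ⟨a, ha, rfl⟩, ha𝒞⟩, ⟨_, ⟨b, hb, rfl⟩, hb𝒞⟩, hout⟩ :=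
    h _ _ (Subtype.coe_image_subset _ _) (Subtype.coe_image_subset _ _)
      (h𝒜.image Subtype.val_injective) (hℬ.image Subtype.val_injective)
  have himg : Subtype.val '' (Subtype.val ⁻¹' 𝒞 : Set S) = 𝒞 :=
    image_preimage_eq_of_subset (Subtype.range_coe ▸ h𝒞)
  rw [← image_union] at hout
  obtain ⟨_, ⟨w, hw, rfl⟩, hw𝒞⟩ := hout
  exact ⟨Subtype.val ⁻¹' 𝒞, Subtype.isCompact_iff.2 (by rwa [himg]),
    ⟨⟨a, ha𝒞⟩, IsInducing.subtypeVal.isPreconnected_image.1 (by rw [himg]; exact hconn.2)⟩,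
    ⟨a, ha, ha𝒞⟩, ⟨b, hb, hb𝒞⟩, ⟨w, hw, hw𝒞⟩⟩

/-- Being D is a Whitney property: every Whitney level of a D-continuum is a
D-continuum. -/
theorem d_whitney_property (X : Type*) [MetricSpace X] [CompactSpace X]
    [ConnectedSpace X] (hX : DSpace X)
    (μ : Hyperspace X → ℝ) (hμcont : Continuous μ)
    (hμ0 : ∀ A : Hyperspace X, (A.1 : Set X).Subsingleton → μ A = 0)
    (hμmono : ∀ A B : Hyperspace X, (A.1 : Set X) ⊂ (B.1 : Set X) → μ A < μ B)
    (t : ℝ) (ht0 : 0 < t)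
    (httop : t < μ ⟨⟨⟨Set.univ, isCompact_univ⟩, Set.univ_nonempty⟩, isConnected_univ⟩) :
    CompactSpace {A : Hyperspace X // μ A = t} ∧
      ConnectedSpace {A : Hyperspace X // μ A = t} ∧
      DSpace {A : Hyperspace X // μ A = t} := by
  have hμ : IsWhitneyMap μ := ⟨hμcont, fun x => hμ0 _ subsingleton_singleton, hμmono⟩
  have hlevel : Iic ⟨⟨⟨univ, isCompact_univ⟩, univ_nonempty⟩, isConnected_univ⟩ ∩ μ ⁻¹' {t} =
      {A | μ A = t} :=
    ext fun A => ⟨fun h => h.2, fun h => ⟨subset_univ _, h⟩⟩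
  have hconn := hμ.isConnected_Iic_inter_level ⟨ht0.le, httop.le⟩
  rw [hlevel] at hconn
  refine ⟨isCompact_iff_compactSpace.mp (isClosed_eq hμcont continuous_const).isCompact,
    Subtype.connectedSpace hconn,
    dSpace_coe_of fun 𝒜 ℬ h𝒜 hℬ => hμ.exists_subset_level_of_dSpace hX ht0 h𝒜 hℬ⟩
end

section
/- Every nondegenerate D-continuum is decomposable, i.e. it can be written as the union of two proper subcontinua. -/
section Continuum

open Set Topology

variable {X : Type*} [TopologicalSpace X]

def IsProperSubcontinuum (K : Set X) : Prop :=
  IsCompact K ∧ IsConnected K ∧ K ≠ univ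

variable (X) in
def IsDecomposable : Prop :=
  ∃ A B : Set X, IsProperSubcontinuum A ∧ IsProperSubcontinuum B ∧ A ∪ B = univ

def composant (p : X) : Set X :=
  ⋃₀ {K | IsProperSubcontinuum K ∧ p ∈ K}

theorem IsClosed.connectedComponentIn {E : Set X} (hE : IsClosed E) (p : X) :
    IsClosed (connectedComponentIn E p) := by
  by_cases hp : p ∈ E
  · rw [connectedComponentIn_eq_image hp]
    exact hE.isClosedMap_subtype_val _ isClosed_connectedComponent
  · simp [connectedComponentIn_eq_empty hp]

theorem isProperSubcontinuum_connectedComponentIn [CompactSpace X] {E : Set X}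
    (hE : IsClosed E) (hE_ne : E ≠ univ) {p : X} (hp : p ∈ E) :
    IsProperSubcontinuum (connectedComponentIn E p) :=
  ⟨(hE.connectedComponentIn p).isCompact, isConnected_connectedComponentIn_iff.2 hp,
    fun h => hE_ne (univ_subset_iff.1 (h ▸ connectedComponentIn_subset E p))⟩

theorem exists_isClopen_mem_disjoint_of_disjoint_connectedComponent [T2Space X]
    [CompactSpace X] {x : X} {F : Set X} (hF : IsClosed F)
    (h : Disjoint (connectedComponent x) F) : ∃ Z, IsClopen Z ∧ x ∈ Z ∧ Disjoint Z F := by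
  rw [connectedComponent_eq_iInter_isClopen, disjoint_iff_inter_eq_empty, inter_comm] at h
  obtain ⟨t, ht⟩ := hF.isCompact.elim_finite_subfamily_closed
    (fun Z : {Z : Set X // IsClopen Z ∧ x ∈ Z} => Z.1) (fun Z => Z.2.1.1) h
  refine ⟨⋂ Z ∈ t, Z.1, isClopen_biInter_finset fun Z _ => Z.2.1,
    mem_iInter₂.2 fun Z _ => Z.2.2, ?_⟩
  rw [disjoint_iff_inter_eq_empty, inter_comm, ht]

theorem connectedComponentIn_inter_frontier_nonempty [T2Space X] [CompactSpace X]
    [ConnectedSpace X] {E : Set X} (hE : IsClosed E) (hE_ne : E ≠ univ) {p : X} (hp : p ∈ E) :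
    (connectedComponentIn E p ∩ frontier E).Nonempty := by
  rw [← not_disjoint_iff_nonempty_inter, connectedComponentIn_eq_image hp,
    disjoint_image_left]
  intro h
  have : CompactSpace E := isCompact_iff_compactSpace.1 hE.isCompact
  obtain ⟨Z, hZ, hpZ, hZF⟩ := exists_isClopen_mem_disjoint_of_disjoint_connectedComponent
    (isClosed_frontier.preimage continuous_subtype_val) h
  obtain ⟨V, hV, rfl⟩ := isOpen_induced_iff.1 hZ.isOpen
  have hEV : E ∩ V = interior E ∩ V := by
    refine Subset.antisymm (fun x ⟨hxE, hxV⟩ => ⟨?_, hxV⟩)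
      (inter_subset_inter_left _ interior_subset)
    by_contra hx
    exact disjoint_left.1 hZF (show (⟨x, hxE⟩ : E) ∈ Subtype.val ⁻¹' V from hxV)
      (show x ∈ frontier E from hE.frontier_eq ▸ ⟨hxE, hx⟩)
  have hclopen : IsClopen (E ∩ V) := by
    refine ⟨?_, hEV ▸ isOpen_interior.inter hV⟩
    rw [← Subtype.image_preimage_coe]
    exact hE.isClosedMap_subtype_val _ hZ.isClosed
  exact hE_ne (univ_subset_iff.1 ((hclopen.eq_univ ⟨p, hp, hpZ⟩) ▸ inter_subset_left))

theorem exists_nontrivial_isProperSubcontinuum_subset [T2Space X] [CompactSpace X]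
    [ConnectedSpace X] {p : X} {U : Set X} (hU : U ∈ 𝓝 p) (hU_ne : U ≠ univ) :
    ∃ A ⊆ U, IsProperSubcontinuum A ∧ A.Nontrivial ∧ p ∈ A := by
  obtain ⟨E, hE, hEc, hEU⟩ := exists_mem_nhds_isClosed_subset hU
  have hE_ne : E ≠ univ := fun h => hU_ne (univ_subset_iff.1 (h ▸ hEU))
  have hpE : p ∈ E := mem_of_mem_nhds hE
  obtain ⟨x, hxA, hxE⟩ := connectedComponentIn_inter_frontier_nonempty hEc hE_ne hpE
  have hxp : x ≠ p := fun h => hxE.2 (h ▸ mem_interior_iff_mem_nhds.2 hE)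
  exact ⟨_, (connectedComponentIn_subset E p).trans hEU,
    isProperSubcontinuum_connectedComponentIn hEc hE_ne hpE,
    ⟨x, hxA, p, mem_connectedComponentIn hpE, hxp⟩, mem_connectedComponentIn hpE⟩

theorem IsPreconnected.union_of_isOpen [PreconnectedSpace X] {K P : Set X}
    (hK : IsPreconnected K) (hK_ne : K.Nonempty) (hP : IsOpen P) (hKP : IsClosed (K ∪ P)) :
    IsPreconnected (K ∪ P) := by
  rw [isPreconnected_iff_subset_of_fully_disjoint_closed hKP]
  intro u v hu hv huv hdisj
  have hK_sub : K ⊆ u ∨ K ⊆ v := isPreconnected_iff_subset_of_disjoint_closed.1 hK u v hu hv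
    (subset_union_left.trans huv) (by rw [hdisj.inter_eq, inter_empty])
  wlog hKu : K ⊆ u generalizing u v
  · exact (this v u hv hu (union_comm u v ▸ huv) hdisj.symm hK_sub.symm
      (hK_sub.resolve_left hKu)).symm
  have hopen : (K ∪ P) ∩ v = P ∩ uᶜ := by
    ext x
    constructor
    · rintro ⟨hx, hxv⟩
      have hxu : x ∉ u := disjoint_right.1 hdisj hxv
      exact ⟨hx.resolve_left fun h => hxu (hKu h), hxu⟩
    · rintro ⟨hxP, hxu⟩
      exact ⟨Or.inr hxP, (huv (Or.inr hxP)).resolve_left hxu⟩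
  have hclopen : IsClopen ((K ∪ P) ∩ v) :=
    ⟨hKP.inter hv, hopen ▸ hP.inter hu.isOpen_compl⟩
  rcases isClopen_iff.1 hclopen with h | h
  · exact Or.inl ((disjoint_iff_inter_eq_empty.2 h).subset_left_of_subset_union huv)
  · obtain ⟨k, hk⟩ := hK_ne
    exact absurd (h ▸ mem_univ k : k ∈ (K ∪ P) ∩ v).2 (disjoint_left.1 hdisj (hKu hk))

theorem isDecomposable_of_interior_nonempty [T2Space X] [CompactSpace X] [ConnectedSpace X]
    {K : Set X} (hK : IsProperSubcontinuum K) (hK_int : (interior K).Nonempty) :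
    IsDecomposable X := by
  obtain ⟨hKc, hKconn, hK_ne⟩ := hK
  by_cases hpre : IsPreconnected Kᶜ
  · refine ⟨K, closure Kᶜ, ⟨hKc, hKconn, hK_ne⟩, ⟨isClosed_closure.isCompact,
      ⟨(nonempty_compl.2 hK_ne).closure, hpre.closure⟩, ?_⟩, ?_⟩
    · rwa [closure_compl, compl_ne_univ]
    · exact univ_subset_iff.1 (union_compl_self K ▸ union_subset_union_right K subset_closure)
  simp only [IsPreconnected, not_forall, not_nonempty_iff_eq_empty] at hpre
  obtain ⟨u, v, hu, hv, hKuv, hu_ne, hv_ne, huv⟩ := hpre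
  have hsplit : ∀ x, x ∉ K → (x ∈ u ↔ x ∉ v) := fun x hx =>
    ⟨fun hxu hxv => eq_empty_iff_forall_notMem.1 huv x ⟨hx, hxu, hxv⟩,
      fun hxv => (hKuv hx).resolve_right hxv⟩
  have hproper : ∀ P Q : Set X, IsOpen P → IsOpen Q → Q.Nonempty → K ∪ P = Qᶜ →
      IsProperSubcontinuum (K ∪ P) := fun P Q hP hQ hQ_ne hKPQ =>
    ⟨hKPQ ▸ hQ.isClosed_compl.isCompact,
      ⟨hKconn.nonempty.mono subset_union_left,
        hKconn.2.union_of_isOpen hKconn.nonempty hP (hKPQ ▸ hQ.isClosed_compl)⟩,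
      hKPQ ▸ compl_ne_univ.2 hQ_ne⟩
  refine ⟨K ∪ (Kᶜ ∩ u), K ∪ (Kᶜ ∩ v),
    hproper _ _ (hKc.isClosed.isOpen_compl.inter hu) (hKc.isClosed.isOpen_compl.inter hv) hv_ne ?_,
    hproper _ _ (hKc.isClosed.isOpen_compl.inter hv) (hKc.isClosed.isOpen_compl.inter hu) hu_ne ?_,
    ?_⟩
  · ext x
    by_cases hx : x ∈ K <;> simp [hx, hsplit x]
  · ext x
    by_cases hx : x ∈ K <;> simp [hx, hsplit x]
  · refine eq_univ_of_forall fun x => ?_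
    by_cases hx : x ∈ K
    · exact Or.inl (Or.inl hx)
    · rcases hKuv hx with hxu | hxv
      exacts [Or.inl (Or.inr ⟨hx, hxu⟩), Or.inr (Or.inr ⟨hx, hxv⟩)]

theorem composant_ne_univ [T2Space X] [CompactSpace X] [SecondCountableTopology X]
    (h : ∀ K : Set X, IsProperSubcontinuum K → interior K = ∅) (p : X) :
    composant p ≠ univ := by
  obtain ⟨b, hbc, hb_empty, hb⟩ := TopologicalSpace.exists_countable_basis X
  have := hbc.to_subtype
  have : Nonempty X := ⟨p⟩
  intro hp
  have hcover : ⋃ U : b, connectedComponentIn (U : Set X)ᶜ p = univ := by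
    refine eq_univ_of_forall fun x => ?_
    obtain ⟨K, ⟨hK, hpK⟩, hxK⟩ := (hp ▸ mem_univ x : x ∈ composant p)
    obtain ⟨y, hy⟩ := nonempty_compl.2 hK.2.2
    obtain ⟨U, hUb, -, hUK⟩ := hb.exists_subset_of_mem_open hy hK.1.isClosed.isOpen_compl
    exact mem_iUnion.2 ⟨⟨U, hUb⟩,
      hK.2.1.isPreconnected.subset_connectedComponentIn hpK (subset_compl_comm.1 hUK) hxK⟩
  obtain ⟨U, hU⟩ := nonempty_interior_of_iUnion_of_closed
    (fun U : b => (hb.isOpen U.2).isClosed_compl.connectedComponentIn p) hcover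
  have hpU : p ∈ (U : Set X)ᶜ := connectedComponentIn_nonempty_iff.1 (hU.mono interior_subset)
  have hU_ne : (U : Set X)ᶜ ≠ univ :=
    compl_ne_univ.2 (nonempty_iff_ne_empty.2 fun h => hb_empty (h ▸ U.2))
  exact hU.ne_empty (h _ (isProperSubcontinuum_connectedComponentIn
    (hb.isOpen U.2).isClosed_compl hU_ne hpU))

theorem mem_composant_self [Nontrivial X] (p : X) : p ∈ composant p := by
  obtain ⟨y, hy⟩ := exists_ne p
  exact ⟨{p}, ⟨⟨isCompact_singleton, isConnected_singleton,
    fun h => hy (eq_univ_iff_forall.1 h y)⟩, rfl⟩, rfl⟩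

theorem eq_univ_of_notMem_composant {p z : X} (hz : z ∉ composant p) {L : Set X}
    (hLc : IsCompact L) (hL : IsConnected L) (hpL : p ∈ L) (hzL : z ∈ L) : L = univ := by
  by_contra hL_ne
  exact hz ⟨L, ⟨⟨hLc, hL, hL_ne⟩, hpL⟩, hzL⟩

theorem eq_univ_of_not_isDecomposable (hind : ¬IsDecomposable X) {L B : Set X}
    (hLc : IsCompact L) (hL : IsConnected L) (hB : IsProperSubcontinuum B)
    (hLB : L ∪ B = univ) : L = univ := by
  by_contra hL_ne
  exact hind ⟨L, B, ⟨hLc, hL, hL_ne⟩, hB, hLB⟩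

theorem isDecomposable_of_dSpace [T2Space X] [CompactSpace X] [SecondCountableTopology X]
    [ConnectedSpace X] [Nontrivial X] (hX : DSpace X) : IsDecomposable X := by
  by_contra hind
  have hint : ∀ K : Set X, IsProperSubcontinuum K → interior K = ∅ := fun K hK =>
    not_nonempty_iff_eq_empty.1 fun hi => hind (isDecomposable_of_interior_nonempty hK hi)
  obtain ⟨p⟩ : Nonempty X := inferInstance
  obtain ⟨z, hz⟩ := nonempty_compl.2 (composant_ne_univ hint p)
  have hpz : p ≠ z := fun h => hz (h ▸ mem_composant_self p)
  obtain ⟨U, hU, V, hV, hUV⟩ := Filter.disjoint_iff.1 (disjoint_nhds_nhds.2 hpz)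
  obtain ⟨A, hAU, hA, hA_nt, hpA⟩ := exists_nontrivial_isProperSubcontinuum_subset hU
    ((ne_univ_iff_exists_notMem U).2 ⟨z, disjoint_right.1 hUV (mem_of_mem_nhds hV)⟩)
  obtain ⟨B, hBV, hB, hB_nt, hzB⟩ := exists_nontrivial_isProperSubcontinuum_subset hV
    ((ne_univ_iff_exists_notMem V).2 ⟨p, disjoint_left.1 hUV (mem_of_mem_nhds hU)⟩)
  have hAB : Disjoint A B := hUV.mono hAU hBV
  obtain ⟨C, hCc, hC, hAC, ⟨b, hbB, hbC⟩, w, hwAB, hwC⟩ :=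
    hX A B hA.1 hA.2.1 hA_nt hB.1 hB.2.1 hB_nt hAB
  have hACB : A ∪ C ∪ B = univ := eq_univ_of_notMem_composant hz ((hA.1.union hCc).union hB.1)
    ((hA.2.1.union hAC hC).union ⟨b, Or.inr hbC, hbB⟩ hB.2.1) (Or.inl (Or.inl hpA)) (Or.inr hzB)
  have hAC_univ : A ∪ C = univ :=
    eq_univ_of_not_isDecomposable hind (hA.1.union hCc) (hA.2.1.union hAC hC) hB hACB
  have hBC_univ : B ∪ C = univ :=
    eq_univ_of_not_isDecomposable hind (hB.1.union hCc) (hB.2.1.union ⟨b, hbB, hbC⟩ hC) hA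
      (by rw [← hACB]; ac_rfl)
  rcases hwAB with hwA | hwB
  · exact hwC ((hBC_univ ▸ mem_univ w : w ∈ B ∪ C).resolve_left (disjoint_left.1 hAB hwA))
  · exact hwC ((hAC_univ ▸ mem_univ w : w ∈ A ∪ C).resolve_left (disjoint_right.1 hAB hwB))

end Continuum

/-- Every nondegenerate D-continuum is decomposable: it is the union of two proper
subcontinua. -/
theorem d_continuum_decomposable (X : Type*) [MetricSpace X] [CompactSpace X]
    [ConnectedSpace X] [Nontrivial X] (hX : DSpace X) :
    ∃ A B : Set X, IsCompact A ∧ IsConnected A ∧ IsCompact B ∧ IsConnected B ∧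
      A ≠ Set.univ ∧ B ≠ Set.univ ∧ A ∪ B = Set.univ := by
  obtain ⟨A, B, ⟨hAc, hA, hA_ne⟩, ⟨hBc, hB, hB_ne⟩, hAB⟩ := isDecomposable_of_dSpace hX
  exact ⟨A, B, hAc, hA, hBc, hB, hA_ne, hB_ne, hAB⟩
end

section
/- Every arcwise connected continuum is a D*-continuum. -/
/-- A space is *arcwise connected* if any two distinct points are joined by an arc, i.e.
an injective continuous image of `[0,1]` with the two points as endpoints. -/
def ArcConnectedSpace (X : Type*) [TopologicalSpace X] : Prop :=
  ∀ x y : X, x ≠ y →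
    ∃ f : Set.Icc (0 : ℝ) 1 → X, Continuous f ∧ Function.Injective f ∧
      f ⟨0, le_refl 0, zero_le_one⟩ = x ∧ f ⟨1, zero_le_one, le_refl 1⟩ = y

/-- A topological space is a *D*-space* if for every pair of disjoint nondegenerate
subcontinua `A, B` there is a subcontinuum `C` meeting both `A` and `B` with
`A \ C ≠ ∅` and `B \ C ≠ ∅`. -/
def DStarSpace (X : Type*) [TopologicalSpace X] : Prop :=
  ∀ A B : Set X, IsCompact A → IsConnected A → A.Nontrivial →
    IsCompact B → IsConnected B → B.Nontrivial → Disjoint A B →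
    ∃ C : Set X, IsCompact C ∧ IsConnected C ∧
      (A ∩ C).Nonempty ∧ (B ∩ C).Nonempty ∧ (A \ C).Nonempty ∧ (B \ C).Nonempty

/-- Every arcwise connected continuum is a D*-continuum. -/
theorem arcConnected_isDStar (X : Type*) [MetricSpace X] [CompactSpace X]
    [ConnectedSpace X] (hX : ArcConnectedSpace X) : DStarSpace X := by
  intro A B hAc hAconn hAnt hBc hBconn hBnt hdisj
  obtain ⟨a, ha⟩ := hAnt.nonempty
  obtain ⟨b, hb⟩ := hBnt.nonempty
  have hab : a ≠ b := fun h => hdisj.ne_of_mem ha hb h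
  obtain ⟨f, hf, hinj, hf0, hf1⟩ := hX a b hab
  have hAcl : IsClosed A := hAc.isClosed
  have hBcl : IsClosed B := hBc.isClosed
  set K : Set ℝ := Subtype.val '' (f ⁻¹' A) with hKdef
  have hKc : IsCompact K :=
    ((hAcl.preimage hf).isCompact).image continuous_subtype_val
  have hK0 : (0:ℝ) ∈ K := ⟨⟨0, le_refl 0, zero_le_one⟩, Set.mem_preimage.mpr (hf0.symm ▸ ha), rfl⟩
  set s := sSup K with hsdef
  have hsK : s ∈ K := hKc.sSup_mem ⟨0, hK0⟩
  obtain ⟨ps, hpsA, hps⟩ := hsK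
  have hs01 : s ∈ Set.Icc (0:ℝ) 1 := hps ▸ ps.2
  set L : Set ℝ := Subtype.val '' (f ⁻¹' B) ∩ Set.Icc s 1 with hLdef
  have hLc : IsCompact L :=
    (((hBcl.preimage hf).isCompact).image continuous_subtype_val).inter_right isClosed_Icc
  have hL1 : (1:ℝ) ∈ L :=
    ⟨⟨⟨1, zero_le_one, le_refl 1⟩, Set.mem_preimage.mpr (hf1.symm ▸ hb), rfl⟩, hs01.2, le_refl 1⟩
  set t := sInf L with htdef
  have htL : t ∈ L := hLc.sInf_mem ⟨1, hL1⟩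
  obtain ⟨⟨pt, hptB, hpt⟩, hst, ht1⟩ := htL
  set S : Set (Set.Icc (0:ℝ) 1) := Subtype.val ⁻¹' Set.Icc s t with hSdef
  -- key uniqueness facts
  have keyA : ∀ p ∈ S, f p ∈ A → p = ps := by
    intro p hp hpA
    have h2 : (p : ℝ) ≤ s := le_csSup hKc.bddAbove ⟨p, hpA, rfl⟩
    exact Subtype.ext ((le_antisymm h2 hp.1).trans hps.symm)
  have keyB : ∀ p ∈ S, f p ∈ B → p = pt := by
    intro p hp hpB
    have hmem : (p : ℝ) ∈ L := ⟨⟨p, hpB, rfl⟩, hp.1, p.2.2⟩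
    have h2 : t ≤ (p : ℝ) := csInf_le hLc.bddBelow hmem
    exact Subtype.ext ((le_antisymm hp.2 h2).trans hpt.symm)
  have hpsS : ps ∈ S := ⟨hps.ge, hps.le.trans hst⟩
  have hptS : pt ∈ S := ⟨hst.trans hpt.ge, hpt.le⟩
  have hSc : IsCompact S := (isClosed_Icc.preimage continuous_subtype_val).isCompact
  have himg : Subtype.val '' S = Set.Icc s t := by
    rw [Subtype.image_preimage_coe]
    exact Set.inter_eq_right.mpr (Set.Icc_subset_Icc hs01.1 ht1)
  have hSconn : IsConnected S := by
    refine ⟨⟨ps, hpsS⟩, ?_⟩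
    have := isPreconnected_Icc (a := s) (b := t)
    rw [← himg] at this
    exact Topology.IsInducing.subtypeVal.isPreconnected_image.mp this
  refine ⟨f '' S, hSc.image hf, hSconn.image f hf.continuousOn, ?_, ?_, ?_, ?_⟩
  · exact ⟨f ps, hpsA, Set.mem_image_of_mem f hpsS⟩
  · exact ⟨f pt, hptB, Set.mem_image_of_mem f hptS⟩
  · obtain ⟨a', ha', hane⟩ := hAnt.exists_ne (f ps)
    refine ⟨a', ha', ?_⟩
    rintro ⟨p, hpS, rfl⟩
    exact hane (congrArg f (keyA p hpS ha'))
  · obtain ⟨b', hb', hbne⟩ := hBnt.exists_ne (f pt)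
    refine ⟨b', hb', ?_⟩
    rintro ⟨p, hpS, rfl⟩
    exact hbne (congrArg f (keyB p hpS hb'))
end
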